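/- Let A = 2K₂, B = P₃ ⊔ K₁, C = K_{1,3}, and D = K₃ ⊔ K₁. The multisets M = {[A ⊔ C], [B ⊔ D]} and M' = {[B ⊔ C], [A ⊔ D]} are distinct multisets of isomorphism classes of graphs with exactly 5 edges, and ED(A ⊔ C) + ED(B ⊔ D) = ED(B ⊔ C) + ED(A ⊔ D) as multisets. Consequently generalized edge reconstruction fails for n = 5 with k = 2 pieces, i.e. k₅ ≤ 2. -/

import Mathlib

/-! Deleting an edge of `G ⊔ H` deletes it from `G` or from `H`, so
`ED(G ⊔ H) = {G' ⊔ H : G' ∈ ED(G)} + {G ⊔ H' : H' ∈ ED(H)}`. Hence if `ED(A) = ED(B)` and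
`ED(C) = ED(D)`, then `ED(A ⊔ C) + ED(B ⊔ D)` and `ED(B ⊔ C) + ED(A ⊔ D)` consist of the same
four families of graphs. This applies because `ED(2K₂) = ED(P₃ ⊔ K₁) = 2·[K₂ ⊔ 2K₁]` and
`ED(K_{1,3}) = ED(K₃ ⊔ K₁) = 3·[P₃ ⊔ K₁]`. The two multisets differ since `2K₂ ⊔ K_{1,3}` has no
isolated vertex, whereas `P₃ ⊔ K₁ ⊔ K_{1,3}` and `2K₂ ⊔ K₃ ⊔ K₁` have one. -/

open SimpleGraph

/-- A finite simple graph, packaged with its (finite) vertex type. -/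
structure FGraph : Type 1 where
  V : Type
  [finV : Finite V]
  graph : SimpleGraph V

attribute [instance] FGraph.finV

namespace FGraph

/-- Two finite graphs are isomorphic if there is a graph isomorphism between them. -/
def IsIsoTo (G H : FGraph) : Prop := Nonempty (G.graph ≃g H.graph)

instance setoid : Setoid FGraph where
  r := IsIsoTo
  iseqv := ⟨fun G => ⟨RelIso.refl G.graph.Adj⟩, fun ⟨e⟩ => ⟨e.symm⟩, fun ⟨e⟩ ⟨f⟩ => ⟨e.trans f⟩⟩

end FGraph

/-- Isomorphism classes of finite simple graphs. -/
def GraphClass : Type 1 := Quotient FGraph.setoid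

namespace FGraph

/-- The isomorphism class of a finite graph. -/
def cls (G : FGraph) : GraphClass := Quotient.mk _ G

/-- The number of edges of a finite graph. -/
noncomputable def edgeCount (G : FGraph) : ℕ := G.graph.edgeSet.ncard

/-- The edge-deleted subgraph `G - e`: same vertices, with the edge `e` removed. -/
def deleteEdge (G : FGraph) (e : Sym2 G.V) : FGraph :=
  { V := G.V, graph := G.graph.deleteEdges {e} }

/-- The multiset of edge-deleted subgraphs of `G` (one for each edge), as graphs. -/
noncomputable def deckGraphs (G : FGraph) : Multiset FGraph :=
  (G.graph.edgeSet.toFinite.toFinset.val).map fun e => G.deleteEdge e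

/-- The edge deck of `G` : the multiset of isomorphism classes of the edge-deleted
subgraphs `G - e`, one for each edge `e` of `G`. -/
noncomputable def edgeDeck (G : FGraph) : Multiset GraphClass :=
  G.deckGraphs.map cls

lemma exists_of_mem_edgeDeck {G : FGraph} {c : GraphClass} (hc : c ∈ G.edgeDeck) :
    ∃ H : FGraph, H.cls = c ∧ H.edgeCount = G.edgeCount - 1 := by
  classical
  rw [edgeDeck, deckGraphs, Multiset.map_map] at hc
  obtain ⟨e, he, rfl⟩ := Multiset.mem_map.mp hc
  refine ⟨G.deleteEdge e, rfl, ?_⟩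
  have he' : e ∈ G.graph.edgeSet := by
    simpa using (Set.Finite.mem_toFinset _).mp he
  simp only [edgeCount, deleteEdge, SimpleGraph.edgeSet_deleteEdges]
  exact Set.ncard_sdiff_singleton_of_mem he'

/-- The disjoint union of two finite graphs. -/
def disjUnion (G H : FGraph) : FGraph :=
  { V := G.V ⊕ H.V, graph := G.graph ⊕g H.graph }

end FGraph

/-- `𝒢 n` is the set of isomorphism classes of graphs with exactly `n` edges. -/
def GClass (n : ℕ) : Type 1 :=
  {c : GraphClass // ∃ G : FGraph, G.cls = c ∧ G.edgeCount = n}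

/-- Given a graph `G` with `n` edges, sum a function `f` over the edge deck of `G`,
regarded as a multiset of isomorphism classes of graphs with `n - 1` edges. -/
noncomputable def FGraph.edgeDeckSum (n : ℕ) (G : FGraph) (hG : G.edgeCount = n)
    {β : Type*} [AddCommMonoid β] (f : GClass (n - 1) → β) : β :=
  (G.edgeDeck.attach.map fun c => f ⟨c.1, by
    obtain ⟨H, h1, h2⟩ := FGraph.exists_of_mem_edgeDeck c.2
    exact ⟨H, h1, by rw [h2, hG]⟩⟩).sum

/-- The subgroup of relations defining `K₀(Γ_{n,n-1})`: for every graph `G` with `n`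
edges, `[G] = Σ_{C ∈ ED(G)} [C]`. -/
def K0Rel (n : ℕ) : AddSubgroup (FreeAbelianGroup (GClass n ⊕ GClass (n - 1))) :=
  AddSubgroup.closure
    {x | ∃ (G : FGraph) (hG : G.edgeCount = n),
      x = FreeAbelianGroup.of (Sum.inl ⟨G.cls, G, rfl, hG⟩)
        - G.edgeDeckSum n hG (fun c => FreeAbelianGroup.of (Sum.inr c))}

/-- `K₀(Γ_{n,n-1})`: the free abelian group on `𝒢 n ⊔ 𝒢 (n-1)` modulo the edge-deck
relations. -/
abbrev K0Gamma (n : ℕ) : Type 1 :=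
  FreeAbelianGroup (GClass n ⊕ GClass (n - 1)) ⧸ K0Rel n

/-- The map `ι_n : 𝒢 n → K₀(Γ_{n,n-1})` sending a class to its image in the quotient. -/
noncomputable def iotaCls (n : ℕ) (c : GClass n) : K0Gamma n :=
  QuotientAddGroup.mk (FreeAbelianGroup.of (Sum.inl c))

/-- Generalized edge reconstruction fails for `n`-edge graphs with `k` pieces: there are
two distinct multisets of `k` isomorphism classes of graphs with exactly `n` edges whose
total edge decks agree. -/
def GERFails (n k : ℕ) : Prop :=
  ∃ M M' : Multiset FGraph,
    Multiset.card M = k ∧ Multiset.card M' = k ∧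
    (∀ G ∈ M, G.edgeCount = n) ∧ (∀ G ∈ M', G.edgeCount = n) ∧
    M.map FGraph.cls ≠ M'.map FGraph.cls ∧
    (M.map FGraph.edgeDeck).sum = (M'.map FGraph.edgeDeck).sum

/-- `kmin n` is the least `k ≥ 1` for which generalized edge reconstruction fails for
`n`-edge graphs. -/
noncomputable def kmin (n : ℕ) : ℕ := sInf {k | 1 ≤ k ∧ GERFails n k}

/-- The graph `2K₂`: four vertices, two disjoint edges. -/
def twoK2 : FGraph :=
  { V := Fin 4, graph := SimpleGraph.fromEdgeSet {s(0, 1), s(2, 3)} }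

/-- The graph `P₃ ⊔ K₁`: a two-edge path together with an isolated vertex. -/
def p3K1 : FGraph :=
  { V := Fin 4, graph := SimpleGraph.fromEdgeSet {s(0, 1), s(1, 2)} }

/-- The graph `K₃ ⊔ K₁`: a triangle together with an isolated vertex. -/
def k3K1 : FGraph :=
  { V := Fin 4, graph := SimpleGraph.fromEdgeSet {s(0, 1), s(1, 2), s(0, 2)} }

/-- The star `K_{1,3}`: a center vertex adjacent to three leaves. -/
def k13 : FGraph :=
  { V := Fin 4, graph := SimpleGraph.fromEdgeSet {s(0, 1), s(0, 2), s(0, 3)} }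

namespace SimpleGraph

variable {V W : Type*} (G : SimpleGraph V) (H : SimpleGraph W)

theorem edgeSet_sum :
    (G ⊕g H).edgeSet = Sym2.map Sum.inl '' G.edgeSet ∪ Sym2.map Sum.inr '' H.edgeSet := by
  ext e
  induction e using Sym2.ind with
  | h u v => cases u <;> cases v <;> simp [Sym2.exists] <;> grind [adj_comm]

theorem deleteEdges_map_inl_sum (e : Sym2 V) :
    (G ⊕g H).deleteEdges {e.map Sum.inl} = G.deleteEdges {e} ⊕g H := by
  ext u v
  induction e using Sym2.ind
  cases u <;> cases v <;> simp

theorem deleteEdges_map_inr_sum (e : Sym2 W) :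
    (G ⊕g H).deleteEdges {e.map Sum.inr} = G ⊕g H.deleteEdges {e} := by
  ext u v
  induction e using Sym2.ind
  cases u <;> cases v <;> simp

end SimpleGraph

def GraphClass.disjUnion : GraphClass → GraphClass → GraphClass :=
  Quotient.map₂ FGraph.disjUnion fun _ _ ⟨f⟩ _ _ ⟨g⟩ => ⟨f.sumCongr g⟩

namespace FGraph

variable {G H : FGraph}

theorem cls_mk_eq_cls_mk {V W : Type} [Finite V] [Finite W] {G : SimpleGraph V}
    {H : SimpleGraph W} (e : V ≃ W) (he : ∀ a b, H.Adj (e a) (e b) ↔ G.Adj a b) :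
    (mk V G).cls = (mk W H).cls :=
  Quotient.sound ⟨⟨e, he _ _⟩⟩

theorem card_edgeDeck (G : FGraph) : Multiset.card G.edgeDeck = G.edgeCount := by
  simp [edgeDeck, deckGraphs, edgeCount, Set.ncard_eq_toFinset_card _ G.graph.edgeSet.toFinite]

theorem edgeDeck_eq_map (S : Finset (Sym2 G.V)) (hS : (S : Set (Sym2 G.V)) = G.graph.edgeSet) :
    G.edgeDeck = S.val.map fun e => (G.deleteEdge e).cls := by
  have : G.graph.edgeSet.toFinite.toFinset = S := by ext; simp [← hS]
  rw [edgeDeck, deckGraphs, this, Multiset.map_map]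
  rfl

theorem edgeDeck_eq_replicate (S : Finset (Sym2 G.V))
    (hS : (S : Set (Sym2 G.V)) = G.graph.edgeSet) {c : GraphClass}
    (hc : ∀ e ∈ S, (G.deleteEdge e).cls = c) : G.edgeDeck = Multiset.replicate S.card c := by
  rw [edgeDeck_eq_map S hS, Multiset.eq_replicate]
  simpa using hc

theorem deleteEdge_map_inl_disjUnion (e : Sym2 G.V) :
    (G.disjUnion H).deleteEdge (e.map Sum.inl) = (G.deleteEdge e).disjUnion H :=
  congrArg (mk _) (G.graph.deleteEdges_map_inl_sum H.graph e)

theorem deleteEdge_map_inr_disjUnion (e : Sym2 H.V) :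
    (G.disjUnion H).deleteEdge (e.map Sum.inr) = G.disjUnion (H.deleteEdge e) :=
  congrArg (mk _) (G.graph.deleteEdges_map_inr_sum H.graph e)

theorem edgeDeck_disjUnion (G H : FGraph) :
    (G.disjUnion H).edgeDeck =
      G.edgeDeck.map (·.disjUnion H.cls) + H.edgeDeck.map (G.cls.disjUnion ·) := by
  have hdeck (S : Finset (Sym2 (G.V ⊕ H.V))) (hS : (S : Set _) = (G.graph ⊕g H.graph).edgeSet) :
      (G.disjUnion H).edgeDeck =
        S.val.map fun e : Sym2 (G.V ⊕ H.V) => ((G.disjUnion H).deleteEdge e).cls :=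
    edgeDeck_eq_map (G := G.disjUnion H) S hS
  set SG := G.graph.edgeSet.toFinite.toFinset.map Function.Embedding.inl.sym2Map
  set SH := H.graph.edgeSet.toFinite.toFinset.map Function.Embedding.inr.sym2Map
  have hdisj : Disjoint SG SH := by
    simp only [SG, SH, Finset.disjoint_left, Finset.mem_map]
    rintro _ ⟨a, -, rfl⟩ ⟨b, -, hb⟩
    induction a using Sym2.ind
    induction b using Sym2.ind
    simp at hb
  rw [hdeck (SG.disjUnion SH hdisj)]
  · simp only [edgeDeck, deckGraphs, SG, SH, Finset.disjUnion_val, Finset.map_val,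
      Multiset.map_add, Multiset.map_map]
    congr 1 <;> refine Multiset.map_congr rfl fun e _ => ?_
    · exact congrArg cls (deleteEdge_map_inl_disjUnion e)
    · exact congrArg cls (deleteEdge_map_inr_disjUnion e)
  · rw [Finset.coe_disjUnion, Finset.coe_map, Finset.coe_map, Set.Finite.coe_toFinset,
      Set.Finite.coe_toFinset]
    exact (edgeSet_sum G.graph H.graph).symm

@[simp]
theorem edgeCount_disjUnion (G H : FGraph) :
    (G.disjUnion H).edgeCount = G.edgeCount + H.edgeCount := by
  simp only [← card_edgeDeck, edgeDeck_disjUnion, Multiset.card_add, Multiset.card_map]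

theorem edgeDeck_disjUnion_add_swap {A B C D : FGraph} (hAB : A.edgeDeck = B.edgeDeck)
    (hCD : C.edgeDeck = D.edgeDeck) :
    (A.disjUnion C).edgeDeck + (B.disjUnion D).edgeDeck =
      (B.disjUnion C).edgeDeck + (A.disjUnion D).edgeDeck := by
  simp only [edgeDeck_disjUnion, hAB, hCD]
  abel

def HasIsolatedVertex (G : FGraph) : Prop := ∃ v, ∀ w, ¬ G.graph.Adj v w

theorem HasIsolatedVertex.of_cls_eq (h : G.cls = H.cls) (hG : G.HasIsolatedVertex) :
    H.HasIsolatedVertex := by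
  obtain ⟨f⟩ := Quotient.exact h
  obtain ⟨v, hv⟩ := hG
  exact ⟨f v, fun w hw => hv (f.symm w) (f.map_adj_iff.mp (by rwa [f.apply_symm_apply]))⟩

theorem hasIsolatedVertex_disjUnion :
    (G.disjUnion H).HasIsolatedVertex ↔ G.HasIsolatedVertex ∨ H.HasIsolatedVertex := by
  simp [HasIsolatedVertex, disjUnion, Sum.exists, Sum.forall]

end FGraph

/-- `K₂ ⊔ 2K₁`. -/
def k2TwoK1 : FGraph :=
  { V := Fin 4, graph := SimpleGraph.fromEdgeSet {s(0, 1)} }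

namespace FGraph

open Equiv Multiset

theorem edgeDeck_twoK2 : twoK2.edgeDeck = replicate 2 k2TwoK1.cls := by
  rw [edgeDeck_eq_replicate (G := twoK2) ({s(0, 1), s(2, 3)} : Finset (Sym2 (Fin 4)))
    (c := k2TwoK1.cls) (by unfold twoK2; ext e; revert e; decide) ?_]
  · rfl
  · unfold twoK2 k2TwoK1
    simp only [Finset.mem_insert, Finset.mem_singleton, forall_eq_or_imp, forall_eq]
    exact ⟨cls_mk_eq_cls_mk (swap 0 2 * swap 1 3) (by decide),
      cls_mk_eq_cls_mk (Equiv.refl _) (by decide)⟩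

theorem edgeDeck_p3K1 : p3K1.edgeDeck = replicate 2 k2TwoK1.cls := by
  rw [edgeDeck_eq_replicate (G := p3K1) ({s(0, 1), s(1, 2)} : Finset (Sym2 (Fin 4)))
    (c := k2TwoK1.cls) (by unfold p3K1; ext e; revert e; decide) ?_]
  · rfl
  · unfold p3K1 k2TwoK1
    simp only [Finset.mem_insert, Finset.mem_singleton, forall_eq_or_imp, forall_eq]
    exact ⟨cls_mk_eq_cls_mk (swap 0 2) (by decide),
      cls_mk_eq_cls_mk (Equiv.refl _) (by decide)⟩

theorem edgeDeck_k13 : k13.edgeDeck = replicate 3 p3K1.cls := by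
  rw [edgeDeck_eq_replicate (G := k13) ({s(0, 1), s(0, 2), s(0, 3)} : Finset (Sym2 (Fin 4)))
    (c := p3K1.cls) (by unfold k13; ext e; revert e; decide) ?_]
  · rfl
  · unfold k13 p3K1
    simp only [Finset.mem_insert, Finset.mem_singleton, forall_eq_or_imp, forall_eq]
    exact ⟨cls_mk_eq_cls_mk (swap 0 3 * swap 0 1) (by decide),
      cls_mk_eq_cls_mk (swap 0 1 * swap 2 3) (by decide),
      cls_mk_eq_cls_mk (swap 0 1) (by decide)⟩

theorem edgeDeck_k3K1 : k3K1.edgeDeck = replicate 3 p3K1.cls := by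
  rw [edgeDeck_eq_replicate (G := k3K1) ({s(0, 1), s(1, 2), s(0, 2)} : Finset (Sym2 (Fin 4)))
    (c := p3K1.cls) (by unfold k3K1; ext e; revert e; decide) ?_]
  · rfl
  · unfold k3K1 p3K1
    simp only [Finset.mem_insert, Finset.mem_singleton, forall_eq_or_imp, forall_eq]
    exact ⟨cls_mk_eq_cls_mk (swap 1 2) (by decide),
      cls_mk_eq_cls_mk (swap 0 1) (by decide),
      cls_mk_eq_cls_mk (Equiv.refl _) (by decide)⟩

theorem not_hasIsolatedVertex_twoK2 : ¬ twoK2.HasIsolatedVertex := by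
  unfold twoK2 HasIsolatedVertex; decide

theorem not_hasIsolatedVertex_k13 : ¬ k13.HasIsolatedVertex := by
  unfold k13 HasIsolatedVertex; decide

theorem hasIsolatedVertex_p3K1 : p3K1.HasIsolatedVertex := by
  unfold p3K1 HasIsolatedVertex; decide

theorem hasIsolatedVertex_k3K1 : k3K1.HasIsolatedVertex := by
  unfold k3K1 HasIsolatedVertex; decide

@[simp] theorem edgeCount_twoK2 : twoK2.edgeCount = 2 := by
  rw [← card_edgeDeck, edgeDeck_twoK2, Multiset.card_replicate]

@[simp] theorem edgeCount_p3K1 : p3K1.edgeCount = 2 := by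
  rw [← card_edgeDeck, edgeDeck_p3K1, Multiset.card_replicate]

@[simp] theorem edgeCount_k13 : k13.edgeCount = 3 := by
  rw [← card_edgeDeck, edgeDeck_k13, Multiset.card_replicate]

@[simp] theorem edgeCount_k3K1 : k3K1.edgeCount = 3 := by
  rw [← card_edgeDeck, edgeDeck_k3K1, Multiset.card_replicate]

theorem cls_twoK2_disjUnion_k13_notMem :
    (twoK2.disjUnion k13).cls ∉
      ({(p3K1.disjUnion k13).cls, (twoK2.disjUnion k3K1).cls} : Multiset GraphClass) := by
  have hAC : ¬ (twoK2.disjUnion k13).HasIsolatedVertex := by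
    simp [hasIsolatedVertex_disjUnion, not_hasIsolatedVertex_twoK2, not_hasIsolatedVertex_k13]
  simp only [Multiset.insert_eq_cons, Multiset.mem_cons, Multiset.mem_singleton, not_or]
  constructor <;> refine fun h => hAC (.of_cls_eq h.symm (hasIsolatedVertex_disjUnion.2 ?_))
  exacts [.inl hasIsolatedVertex_p3K1, .inr hasIsolatedVertex_k3K1]

end FGraph

/-- with `A = 2K₂`, `B = P₃ ⊔ K₁`, `C = K_{1,3}`, `D = K₃ ⊔ K₁`, the
multisets `{[A ⊔ C], [B ⊔ D]}` and `{[B ⊔ C], [A ⊔ D]}` are distinct multisets of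
classes of 5-edge graphs with `ED(A ⊔ C) + ED(B ⊔ D) = ED(B ⊔ C) + ED(A ⊔ D)`;
hence generalized edge reconstruction fails for `n = 5` with `k = 2`, i.e. `k₅ ≤ 2`. -/
theorem k5_le_two :
    (twoK2.disjUnion k13).edgeCount = 5 ∧
    (p3K1.disjUnion k3K1).edgeCount = 5 ∧
    (p3K1.disjUnion k13).edgeCount = 5 ∧
    (twoK2.disjUnion k3K1).edgeCount = 5 ∧
    ({(twoK2.disjUnion k13).cls, (p3K1.disjUnion k3K1).cls} : Multiset GraphClass)
      ≠ {(p3K1.disjUnion k13).cls, (twoK2.disjUnion k3K1).cls} ∧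
    (twoK2.disjUnion k13).edgeDeck + (p3K1.disjUnion k3K1).edgeDeck
      = (p3K1.disjUnion k13).edgeDeck + (twoK2.disjUnion k3K1).edgeDeck ∧
    GERFails 5 2 ∧ kmin 5 ≤ 2 := by
  have hdeck := FGraph.edgeDeck_disjUnion_add_swap
    (FGraph.edgeDeck_twoK2.trans FGraph.edgeDeck_p3K1.symm)
    (FGraph.edgeDeck_k13.trans FGraph.edgeDeck_k3K1.symm)
  have hne : ({(twoK2.disjUnion k13).cls, (p3K1.disjUnion k3K1).cls} : Multiset GraphClass)
      ≠ {(p3K1.disjUnion k13).cls, (twoK2.disjUnion k3K1).cls} := fun h =>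
    FGraph.cls_twoK2_disjUnion_k13_notMem (h ▸ Multiset.mem_cons_self _ _)
  have hfails : GERFails 5 2 :=
    ⟨{twoK2.disjUnion k13, p3K1.disjUnion k3K1}, {p3K1.disjUnion k13, twoK2.disjUnion k3K1},
      rfl, rfl, by simp, by simp, by simpa using hne, by simpa using hdeck⟩
  exact ⟨by simp, by simp, by simp, by simp, hne, hdeck, hfails, Nat.sInf_le ⟨one_le_two, hfails⟩⟩
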